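/- Jackson's conjecture, in the form 'every k-diregular oriented graph on at most 4k + 1 vertices with k ≠ 2 contains a directed Hamiltonian cycle', is false: there exists a 3-diregular oriented graph on 12 ≤ 4·3 + 1 vertices with no directed Hamiltonian cycle. -/
import Mathlib

def search : Nat → List (ZMod 12) → ZMod 12 → Bool
  | 0, _, cur => cur == 0
  | n+1, visited, cur =>
    [2,3,8].any fun d =>
      let x := cur + d
      if n == 0 then x == 0
      else !(visited.contains x) && search n (x :: visited) x

def trace (w : ZMod 12 → ZMod 12) : Nat → List (ZMod 12)
  | 0 => [w 0]
  | n+1 => w (n+1) :: trace w n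

lemma mem_trace (w : ZMod 12 → ZMod 12) (n : Nat) (x : ZMod 12) :
    x ∈ trace w n ↔ ∃ m ≤ n, x = w m := by
  induction n with
  | zero =>
    simp only [trace, List.mem_singleton]
    constructor
    · rintro h; exact ⟨0, le_refl _, by simpa using h⟩
    · rintro ⟨m, hm, h⟩
      have : m = 0 := by omega
      subst this; simpa using h
  | succ n ih =>
    simp only [trace, List.mem_cons, ih]
    constructor
    · rintro (h | ⟨m, hm, h⟩)
      · exact ⟨n+1, le_refl _, by push_cast; exact h⟩
      · exact ⟨m, by omega, h⟩
    · rintro ⟨m, hm, h⟩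
      rcases Nat.lt_or_ge m (n+1) with h' | h'
      · exact Or.inr ⟨m, by omega, h⟩
      · have : m = n + 1 := by omega
        subst this
        exact Or.inl (by push_cast at h ⊢; exact h)

lemma key (w : ZMod 12 → ZMod 12) (hw : Function.Injective w) (h0 : w 0 = 0)
    (harc : ∀ k : ZMod 12, (w (k+1) - w k = 2 ∨ w (k+1) - w k = 3 ∨ w (k+1) - w k = 8)) :
    ∀ j, j ≤ 12 → search j (trace w (12 - j)) (w ((12 - j : Nat) : ZMod 12)) = true := by
  intro j
  induction j with
  | zero =>
    intro _
    show ((w (((12 - 0 : Nat) : ZMod 12)) == 0) = true)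
    have h12 : ((12 - 0 :Nat) : ZMod 12) = 0 := by decide
    rw [h12, h0]
    simp
  | succ j ih =>
    intro hj
    set n : Nat := 12 - (j+1) with hn
    have h12j : 12 - j = n + 1 := by omega
    have harcn := harc (n : ZMod 12)
    set d : ZMod 12 := w ((n : ZMod 12) + 1) - w (n : ZMod 12) with hd
    have hdmem : d ∈ [(2:ZMod 12),3,8] := by
      rcases harcn with h | h | h <;> rw [h] <;> simp
    have hx : w (n : ZMod 12) + d = w ((n : ZMod 12) + 1) := by
      rw [hd]; ring_nf
    show search (j+1) (trace w n) (w n) = true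
    rw [search]
    apply List.any_eq_true.mpr
    refine ⟨d, hdmem, ?_⟩
    show (if (j == 0) then (w (n : ZMod 12) + d == 0) else
      (!((trace w n).contains (w (n : ZMod 12) + d)) &&
        search j ((w (n : ZMod 12) + d) :: trace w n) (w (n : ZMod 12) + d))) = true
    rw [hx]
    match j, hj, ih with
    | 0, _, _ =>
      have hn11 : n = 11 := by omega
      rw [hn11]
      have h12 : (11 : ZMod 12) + 1 = 0 := by decide
      simp [h12, h0]
    | (j'+1), hj, ih =>
      rw [if_neg (by simp)]
      have hnle : n + 1 < 12 := by omega
      have hcast : ((n : ZMod 12) + 1) = (((n+1 : Nat)) : ZMod 12) := by push_cast; ring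
      have hmem : w ((n : ZMod 12) + 1) ∉ trace w n := by
        rw [mem_trace]
        rintro ⟨m, hm, hme⟩
        have heq : ((m : Nat) : ZMod 12) = (((n+1 : Nat)) : ZMod 12) := by
          rw [← hcast]; exact hw hme.symm
        have h1 : ((m : Nat) : ZMod 12).val = m := ZMod.val_cast_of_lt (by omega)
        have h2 : (((n+1 : Nat)) : ZMod 12).val = n+1 := ZMod.val_cast_of_lt (by omega)
        rw [heq, h2] at h1
        omega
      have hc : ((trace w n).contains (w ((n : ZMod 12) + 1))) = false := by
        rw [Bool.eq_false_iff]
        intro hcontra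
        exact hmem (by simpa using hcontra)
      rw [hc]
      have hIH := ih (by omega)
      rw [h12j] at hIH
      have htr : trace w (n+1) = w ((n : ZMod 12) + 1) :: trace w n := rfl
      rw [htr] at hIH
      rw [show (((n+1 : Nat)) : ZMod 12) = (n : ZMod 12) + 1 from hcast.symm] at hIH
      simpa using hIH

theorem stmt_8 :
    ∃ arc : ZMod 12 → ZMod 12 → Bool,
      Fintype.card (ZMod 12) ≤ 4 * 3 + 1 ∧
      (∀ v : ZMod 12, (Finset.univ.filter (fun j => arc v j)).card = 3) ∧
      (∀ v : ZMod 12, (Finset.univ.filter (fun i => arc i v)).card = 3) ∧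
      (∀ i j : ZMod 12, ¬ (arc i j ∧ arc j i)) ∧
      ¬ ∃ v : ZMod 12 ≃ ZMod 12, ∀ k : ZMod 12, arc (v k) (v (k + 1)) := by
  refine ⟨fun i j => decide (j - i = 2 ∨ j - i = 3 ∨ j - i = 8),
    by decide, by decide, by decide, by decide, ?_⟩
  rintro ⟨v, hv⟩
  set t := v.symm 0 with ht
  set w : ZMod 12 → ZMod 12 := fun k => v (k + t) with hwdef
  have h0 : w 0 = 0 := by simp [hwdef, ht]
  have hw : Function.Injective w := by
    intro a b hab
    have := v.injective hab
    exact add_right_cancel this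
  have harc : ∀ k : ZMod 12,
      (w (k+1) - w k = 2 ∨ w (k+1) - w k = 3 ∨ w (k+1) - w k = 8) := by
    intro k
    have h := hv (k + t)
    rw [add_right_comm] at h
    exact of_decide_eq_true h
  have hkey := key w hw h0 harc 12 (le_refl _)
  have hfalse : search 12 [0] 0 = false := by decide
  rw [show (12-12 : Nat) = 0 from rfl] at hkey
  simp only [trace, Nat.cast_zero, h0] at hkey
  rw [hfalse] at hkey
  exact Bool.false_ne_true hkey
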